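/- arXiv:2408.00186 — 3 statements merged into one kernel-verified Lean document; each statement's English description precedes it below -/
import Mathlib

section
/- For nonnegative integers k, n, x, the q-analog of Suranyi's formula holds: ∑_{r=0}^{min(k,n)} q^{r²} · C_q(k, r) · C_q(n, r) · C_q(x+k+n-r, k+n) = C_q(x+k, k) · C_q(x+n, n). -/
open Finset

/-- The q-Pochhammer symbol `(a;q)_n = ∏_{j=0}^{n-1} (1 - a q^j)`. -/
noncomputable def qPoch (q a : RatFunc ℚ) (n : ℕ) : RatFunc ℚ :=
  ∏ j ∈ Finset.range n, (1 - a * q ^ j)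

/-- The Gaussian (q-binomial) coefficient `C_q(m, k)`, defined as
`(q;q)_m / ((q;q)_k (q;q)_{m-k})` for `0 ≤ k ≤ m`, and `0` otherwise. -/
noncomputable def qBinom (q : RatFunc ℚ) (m k : ℤ) : RatFunc ℚ :=
  if 0 ≤ k ∧ k ≤ m then
    qPoch q q m.toNat / (qPoch q q k.toNat * qPoch q q (m - k).toNat)
  else 0

/-! Expand `C_q(x+k+n-r, k+n)` by the q-Vandermonde identity and merge
`C_q(n, r) C_q(n-r, t) = C_q(n, s) C_q(s, r)` with `s = r + t`. After exchanging the sums,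
the inner sum over `r` is q-Vandermonde read the other way round and collapses to
`q^{s²} C_q(k+s, k)`. Merging `C_q(x+k, k+s) C_q(k+s, k) = C_q(x+k, k) C_q(x, s)` leaves
`C_q(x+k, k) ∑_s q^{s²} C_q(x, s) C_q(n, s)`, and one more q-Vandermonde gives `C_q(x+n, n)`. -/

section
variable {K : Type*} [Field K]

def qFactorial (q : K) (n : ℕ) : K := ∏ j ∈ range n, (1 - q ^ (j + 1))

lemma qFactorial_zero (q : K) : qFactorial q 0 = 1 := prod_range_zero _

lemma qFactorial_succ (q : K) (n : ℕ) :
    qFactorial q (n + 1) = qFactorial q n * (1 - q ^ (n + 1)) :=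
  prod_range_succ _ _

lemma one_sub_pow_ne_zero_of_not_isOfFinOrder {q : K} (hq : ¬IsOfFinOrder q) {n : ℕ}
    (hn : n ≠ 0) : 1 - q ^ n ≠ 0 :=
  sub_ne_zero.2 fun h => hq <| isOfFinOrder_iff_pow_eq_one.2 ⟨n, Nat.pos_of_ne_zero hn, h.symm⟩

lemma qFactorial_ne_zero {q : K} (hq : ¬IsOfFinOrder q) (n : ℕ) : qFactorial q n ≠ 0 :=
  prod_ne_zero_iff.2 fun j _ => one_sub_pow_ne_zero_of_not_isOfFinOrder hq j.succ_ne_zero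

def gaussBinom (q : K) (m j : ℕ) : K :=
  if j ≤ m then qFactorial q m / (qFactorial q j * qFactorial q (m - j)) else 0

variable {q : K}

lemma gaussBinom_of_le {m j : ℕ} (h : j ≤ m) :
    gaussBinom q m j = qFactorial q m / (qFactorial q j * qFactorial q (m - j)) :=
  if_pos h

lemma gaussBinom_of_lt {m j : ℕ} (h : m < j) : gaussBinom q m j = 0 := if_neg h.not_ge

lemma gaussBinom_self (hq : ¬IsOfFinOrder q) (m : ℕ) : gaussBinom q m m = 1 := by
  rw [gaussBinom_of_le le_rfl, Nat.sub_self, qFactorial_zero, mul_one,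
    div_self (qFactorial_ne_zero hq m)]

lemma gaussBinom_zero_right (hq : ¬IsOfFinOrder q) (m : ℕ) : gaussBinom q m 0 = 1 := by
  rw [gaussBinom_of_le m.zero_le, Nat.sub_zero, qFactorial_zero, one_mul,
    div_self (qFactorial_ne_zero hq m)]

lemma gaussBinom_symm {m j : ℕ} (h : j ≤ m) : gaussBinom q m (m - j) = gaussBinom q m j := by
  rw [gaussBinom_of_le h, gaussBinom_of_le (m.sub_le j), Nat.sub_sub_self h, mul_comm]

lemma gaussBinom_symm_add (a b : ℕ) : gaussBinom q (a + b) a = gaussBinom q (a + b) b := by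
  rw [← gaussBinom_symm (Nat.le_add_right a b), Nat.add_sub_cancel_left]

lemma gaussBinom_succ_succ (hq : ¬IsOfFinOrder q) (m j : ℕ) :
    gaussBinom q (m + 1) (j + 1) = gaussBinom q m j + q ^ (j + 1) * gaussBinom q m (j + 1) := by
  rcases lt_trichotomy j m with h | rfl | h
  · obtain ⟨d, rfl⟩ := Nat.exists_eq_add_of_lt h
    rw [gaussBinom_of_le (by omega), gaussBinom_of_le (by omega), gaussBinom_of_le (by omega),
      show j + d + 1 + 1 - (j + 1) = d + 1 by omega, show j + d + 1 - j = d + 1 by omega,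
      show j + d + 1 - (j + 1) = d by omega, qFactorial_succ _ (j + d + 1), qFactorial_succ _ j,
      qFactorial_succ _ d]
    field_simp [qFactorial_ne_zero hq j, qFactorial_ne_zero hq d,
      one_sub_pow_ne_zero_of_not_isOfFinOrder hq j.succ_ne_zero,
      one_sub_pow_ne_zero_of_not_isOfFinOrder hq d.succ_ne_zero]
    ring
  · rw [gaussBinom_self hq, gaussBinom_self hq, gaussBinom_of_lt (Nat.lt_succ_self j), mul_zero,
      add_zero]
  · rw [gaussBinom_of_lt (by omega), gaussBinom_of_lt h, gaussBinom_of_lt (by omega), mul_zero,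
      add_zero]

-- The first Pascal rule, read through the symmetry `C_q(m, j) = C_q(m, m - j)`.
lemma gaussBinom_succ_succ' (hq : ¬IsOfFinOrder q) (m j : ℕ) :
    gaussBinom q (m + 1) (j + 1) = q ^ (m - j) * gaussBinom q m j + gaussBinom q m (j + 1) := by
  rcases lt_or_ge m j with h | h
  · rw [gaussBinom_of_lt h, gaussBinom_of_lt (by omega), gaussBinom_of_lt (by omega), mul_zero,
      add_zero]
  obtain ⟨i, rfl⟩ := Nat.exists_eq_add_of_le h
  rcases i with _ | i
  · rw [add_zero, gaussBinom_self hq, gaussBinom_self hq, gaussBinom_of_lt (Nat.lt_succ_self j),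
      Nat.sub_self, pow_zero, one_mul, add_zero]
  have e1 := gaussBinom_symm_add (q := q) (j + 1) (i + 1)
  have e2 := gaussBinom_symm_add (q := q) (j + 1) i
  have e3 := gaussBinom_symm_add (q := q) j (i + 1)
  rw [show j + 1 + (i + 1) = j + (i + 1) + 1 by ring, gaussBinom_succ_succ hq _ i] at e1
  rw [show j + 1 + i = j + (i + 1) by ring] at e2
  rw [e1, e2, e3, Nat.add_sub_cancel_left, add_comm]

lemma gaussBinom_mul (hq : ¬IsOfFinOrder q) (n r t : ℕ) :
    gaussBinom q n (r + t) * gaussBinom q (r + t) r =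
      gaussBinom q n r * gaussBinom q (n - r) t := by
  by_cases h : r + t ≤ n
  · obtain ⟨d, rfl⟩ := Nat.exists_eq_add_of_le h
    rw [gaussBinom_of_le h, gaussBinom_of_le (by omega), gaussBinom_of_le (by omega),
      gaussBinom_of_le (by omega), show r + t + d - r = t + d by omega,
      show r + t + d - (r + t) = d by omega, Nat.add_sub_cancel_left, Nat.add_sub_cancel_left]
    have := qFactorial_ne_zero hq
    field_simp [this r, this t, this d, this (t + d), this (r + t), this (r + t + d)]
  · rw [gaussBinom_of_lt (not_le.1 h), zero_mul]
    rcases le_or_gt r n with hr | hr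
    · rw [gaussBinom_of_lt (show n - r < t by omega), mul_zero]
    · rw [gaussBinom_of_lt hr, zero_mul]

lemma gaussBinom_vandermonde (hq : ¬IsOfFinOrder q) (a b m : ℕ) :
    gaussBinom q (a + b) (m + b) =
      ∑ t ∈ range (b + 1), q ^ (t * (t + m)) * gaussBinom q a (m + t) * gaussBinom q b t := by
  induction b generalizing m with
  | zero => simp [gaussBinom_self hq]
  | succ b ih =>
    -- Split the left side by the first Pascal rule and `C_q(b + 1, t)` by the second one:
    -- the two resulting sums are the induction hypotheses at `m` and `m + 1`.
    have pascal : ∀ i ∈ range (b + 1),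
        q ^ ((i + 1) * (i + 1 + m)) * gaussBinom q a (m + (i + 1)) *
            gaussBinom q (b + 1) (i + 1) =
          q ^ (m + b + 1) *
              (q ^ (i * (i + (m + 1))) * gaussBinom q a (m + 1 + i) * gaussBinom q b i) +
            q ^ ((i + 1) * (i + 1 + m)) * gaussBinom q a (m + (i + 1)) *
              gaussBinom q b (i + 1) := by
      intro i hi
      obtain ⟨c, rfl⟩ := Nat.exists_eq_add_of_le (Nat.lt_succ_iff.1 (mem_range.1 hi))
      rw [gaussBinom_succ_succ' hq, Nat.add_sub_cancel_left, show m + 1 + i = m + (i + 1) by ring]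
      ring
    rw [← add_assoc, ← add_assoc, gaussBinom_succ_succ hq, ih, add_right_comm, ih (m + 1),
      sum_range_succ' _ (b + 1), sum_congr rfl pascal, sum_add_distrib, ← mul_sum]
    have shift := sum_range_succ'
      (fun t => q ^ (t * (t + m)) * gaussBinom q a (m + t) * gaussBinom q b t) (b + 1)
    rw [sum_range_succ, gaussBinom_of_lt (Nat.lt_succ_self b), mul_zero, add_zero,
      gaussBinom_zero_right hq] at shift
    rw [gaussBinom_zero_right hq]
    linear_combination shift

lemma gaussBinom_add_eq_sum_of_le (hq : ¬IsOfFinOrder q) {k s : ℕ} (hks : k ≤ s) :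
    gaussBinom q (k + s) k =
      ∑ r ∈ range (k + 1), q ^ ((s - r) * (k - r)) * gaussBinom q k r * gaussBinom q s r := by
  -- q-Vandermonde at `m = s - k`, summed backwards.
  have h := gaussBinom_vandermonde hq s k (s - k)
  rw [Nat.sub_add_cancel hks, ← sum_range_reflect, add_comm s k, ← gaussBinom_symm_add] at h
  rw [h]
  refine sum_congr rfl fun r hr => ?_
  have hrk : r ≤ k := Nat.lt_succ_iff.1 (mem_range.1 hr)
  rw [Nat.add_sub_cancel, add_comm (k - r), Nat.sub_add_sub_cancel hks hrk,
    gaussBinom_symm (by omega), gaussBinom_symm hrk]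
  ring

lemma gaussBinom_add_eq_sum (hq : ¬IsOfFinOrder q) {k s N : ℕ} (hN : min k s ≤ N) :
    gaussBinom q (k + s) k =
      ∑ r ∈ range (N + 1), q ^ ((s - r) * (k - r)) * gaussBinom q k r * gaussBinom q s r := by
  wlog hks : k ≤ s generalizing k s
  · rw [gaussBinom_symm_add, add_comm, this (min_comm k s ▸ hN) (le_of_not_ge hks)]
    exact sum_congr rfl fun r _ => by ring
  rw [gaussBinom_add_eq_sum_of_le hq hks]
  refine sum_subset (range_subset_range.2 (by omega)) fun r _ hr => ?_
  rw [gaussBinom_of_lt (by simpa using hr), mul_zero, zero_mul]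

lemma gaussBinom_mul_gaussBinom_add_sub (hq : ¬IsOfFinOrder q) (a c : ℕ) {n r : ℕ}
    (hr : r ≤ n) :
    gaussBinom q n r * gaussBinom q (a + (n - r)) (c + n) =
      ∑ s ∈ range (n + 1),
        q ^ ((s - r) * (c + s)) * gaussBinom q a (c + s) * gaussBinom q n s * gaussBinom q s r := by
  have h := gaussBinom_vandermonde hq a (n - r) (c + r)
  rw [show c + r + (n - r) = c + n by omega] at h
  rw [h, mul_sum, ← sum_range_add_sum_Ico _ (show r ≤ n + 1 by omega), sum_Ico_eq_sum_range,
    show n + 1 - r = n - r + 1 by omega,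
    sum_eq_zero (s := range r) fun i hi => by rw [gaussBinom_of_lt (mem_range.1 hi), mul_zero],
    zero_add]
  refine sum_congr rfl fun t _ => ?_
  rw [mul_assoc _ (gaussBinom q n (r + t)), gaussBinom_mul hq, Nat.add_sub_cancel_left,
    ← add_assoc c r t]
  ring

theorem gaussBinom_suranyi (hq : ¬IsOfFinOrder q) (k n x : ℕ) :
    ∑ r ∈ range (n + 1),
        q ^ (r * r) * gaussBinom q k r * gaussBinom q n r * gaussBinom q (x + k + (n - r)) (k + n) =
      gaussBinom q (x + k) k * gaussBinom q (x + n) n := by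
  calc _ = ∑ r ∈ range (n + 1), ∑ s ∈ range (n + 1), q ^ (r * r + (s - r) * (k + s)) *
          gaussBinom q k r * gaussBinom q (x + k) (k + s) * gaussBinom q n s *
            gaussBinom q s r := by
        refine sum_congr rfl fun r hr => ?_
        rw [mul_assoc _ (gaussBinom q n r), gaussBinom_mul_gaussBinom_add_sub hq (x + k) k
          (Nat.lt_succ_iff.1 (mem_range.1 hr)), mul_sum]
        exact sum_congr rfl fun s _ => by ring
    _ = ∑ s ∈ range (n + 1), ∑ r ∈ range (n + 1), q ^ (r * r + (s - r) * (k + s)) *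
          gaussBinom q k r * gaussBinom q (x + k) (k + s) * gaussBinom q n s *
            gaussBinom q s r :=
        sum_comm
    _ = ∑ s ∈ range (n + 1), q ^ (s * s) * gaussBinom q (x + k) (k + s) * gaussBinom q n s *
          ∑ r ∈ range (n + 1),
            q ^ ((s - r) * (k - r)) * gaussBinom q k r * gaussBinom q s r := by
        refine sum_congr rfl fun s _ => ?_
        rw [mul_sum]
        refine sum_congr rfl fun r _ => ?_
        rcases lt_or_ge s r with hsr | hrs
        · rw [gaussBinom_of_lt hsr]
          ring
        rcases lt_or_ge k r with hkr | hrk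
        · rw [gaussBinom_of_lt hkr]
          ring
        have hexp : r * r + (s - r) * (k + s) = s * s + (s - r) * (k - r) := by
          zify [hrs, hrk]
          ring
        rw [hexp, pow_add]
        ring
    _ = ∑ s ∈ range (n + 1),
          gaussBinom q (x + k) k * (q ^ (s * s) * gaussBinom q x s * gaussBinom q n s) := by
        refine sum_congr rfl fun s hs => ?_
        have hsn : min k s ≤ n := (min_le_right k s).trans (Nat.lt_succ_iff.1 (mem_range.1 hs))
        rw [← gaussBinom_add_eq_sum hq hsn, mul_assoc, mul_comm (gaussBinom q n s), ← mul_assoc,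
          mul_assoc _ (gaussBinom q (x + k) (k + s)), gaussBinom_mul hq, Nat.add_sub_cancel]
        ring
    _ = _ := by
        rw [← mul_sum]
        simpa using congrArg (gaussBinom q (x + k) k * ·) (gaussBinom_vandermonde hq x n 0).symm

end

lemma RatFunc.not_isOfFinOrder_X {K : Type*} [Field K] :
    ¬IsOfFinOrder (RatFunc.X : RatFunc K) := by
  rw [isOfFinOrder_iff_pow_eq_one]
  rintro ⟨n, hn, hX⟩
  rw [← RatFunc.algebraMap_X, ← map_pow, ← map_one (algebraMap (Polynomial K) _)] at hX
  have := congrArg Polynomial.natDegree (RatFunc.algebraMap_injective K hX)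
  simp only [Polynomial.natDegree_pow, Polynomial.natDegree_X, mul_one,
    Polynomial.natDegree_one] at this
  omega

lemma qPoch_self (q : RatFunc ℚ) (n : ℕ) : qPoch q q n = qFactorial q n :=
  prod_congr rfl fun j _ => by rw [pow_succ']

lemma qBinom_natCast (q : RatFunc ℚ) (m j : ℕ) : qBinom q m j = gaussBinom q m j := by
  by_cases h : j ≤ m
  · rw [qBinom, if_pos ⟨Int.natCast_nonneg j, Int.ofNat_le.2 h⟩, gaussBinom_of_le h,
      ← Nat.cast_sub h, Int.toNat_natCast, Int.toNat_natCast, Int.toNat_natCast, qPoch_self,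
      qPoch_self, qPoch_self]
  · rw [qBinom, if_neg (by omega), gaussBinom_of_lt (not_le.1 h)]

theorem q_suranyi (k n x : ℕ) :
    ∑ r ∈ Finset.range (min k n + 1),
      (RatFunc.X : RatFunc ℚ) ^ (r ^ 2) *
        qBinom RatFunc.X (k : ℤ) (r : ℤ) * qBinom RatFunc.X (n : ℤ) (r : ℤ) *
        qBinom RatFunc.X ((x : ℤ) + k + n - r) ((k : ℤ) + n)
    = qBinom RatFunc.X ((x : ℤ) + k) (k : ℤ) * qBinom RatFunc.X ((x : ℤ) + n) (n : ℤ) := by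
  calc _ = ∑ r ∈ range (min k n + 1), RatFunc.X ^ (r * r) * gaussBinom RatFunc.X k r *
        gaussBinom RatFunc.X n r * gaussBinom RatFunc.X (x + k + (n - r)) (k + n) := by
        refine sum_congr rfl fun r hr => ?_
        have hrn : r ≤ n := by have := mem_range.1 hr; omega
        rw [show (x : ℤ) + k + n - r = (x + k + (n - r) : ℕ) by push_cast [hrn]; ring,
          ← Nat.cast_add k n, qBinom_natCast, qBinom_natCast, qBinom_natCast, sq]
    _ = ∑ r ∈ range (n + 1), RatFunc.X ^ (r * r) * gaussBinom RatFunc.X k r *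
        gaussBinom RatFunc.X n r * gaussBinom RatFunc.X (x + k + (n - r)) (k + n) := by
        refine sum_subset (range_subset_range.2 (by omega)) fun r hr hrk => ?_
        rw [gaussBinom_of_lt (by simp only [mem_range] at hr hrk; omega)]
        ring
    _ = _ := by
        rw [gaussBinom_suranyi RatFunc.not_isOfFinOrder_X, ← Nat.cast_add, ← Nat.cast_add,
          qBinom_natCast, qBinom_natCast]
end

section
/- Let a, b, c be positive integers with c > a + b (Gauss condition). Then ∑_{n=0}^{min(a,b)} q^{n(c+n-1)} · C_q(a, n) · C_q(b+c−1, b−n) = C_q(a+b+c−1, b), where C_q denotes the Gaussian binomial coefficient. -/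
open Finset

noncomputable def gb (q : RatFunc ℚ) : ℕ → ℕ → RatFunc ℚ
  | 0, 0 => 1
  | 0, _+1 => 0
  | _+1, 0 => 1
  | m+1, k+1 => gb q m (k+1) + q ^ (m - k) * gb q m k

lemma gb_zero_right (q : RatFunc ℚ) (m : ℕ) : gb q m 0 = 1 := by
  cases m <;> rfl

lemma gb_eq_zero (q : RatFunc ℚ) {m k : ℕ} (h : m < k) : gb q m k = 0 := by
  induction m generalizing k with
  | zero => cases k with
    | zero => omega
    | succ k => rfl
  | succ m ih =>
    cases k with
    | zero => omega
    | succ k =>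
      show gb q m (k+1) + q ^ (m - k) * gb q m k = 0
      rw [ih (by omega), ih (by omega), mul_zero, add_zero]

lemma gb_self (q : RatFunc ℚ) (m : ℕ) : gb q m m = 1 := by
  induction m with
  | zero => rfl
  | succ m ih =>
    show gb q m (m+1) + q ^ (m - m) * gb q m m = 1
    rw [gb_eq_zero q (by omega), ih, Nat.sub_self, pow_zero, one_mul, zero_add]

lemma one_sub_X_pow_ne_zero (j : ℕ) (hj : 0 < j) :
    (1 : RatFunc ℚ) - RatFunc.X ^ j ≠ 0 := by
  rw [sub_ne_zero]
  intro hX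
  have h1 : (algebraMap (Polynomial ℚ) (RatFunc ℚ)) (1 : Polynomial ℚ)
      = (algebraMap (Polynomial ℚ) (RatFunc ℚ)) (Polynomial.X ^ j) := by
    rw [map_one, map_pow, RatFunc.algebraMap_X, hX]
  have h2 := RatFunc.algebraMap_injective ℚ h1
  have := congrArg Polynomial.natDegree h2
  simp [Polynomial.natDegree_X_pow] at this
  omega

lemma qPoch_ne_zero (n : ℕ) : qPoch RatFunc.X RatFunc.X n ≠ 0 := by
  unfold qPoch
  apply Finset.prod_ne_zero_iff.mpr
  intro j _
  have := one_sub_X_pow_ne_zero (j+1) (by omega)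
  rwa [pow_succ'] at this

lemma qPoch_succ (n : ℕ) :
    qPoch RatFunc.X RatFunc.X (n+1)
      = qPoch RatFunc.X RatFunc.X n * (1 - RatFunc.X ^ (n+1)) := by
  unfold qPoch
  rw [Finset.prod_range_succ, pow_succ']

lemma qBinom_ratio {m k : ℕ} (h : k ≤ m) :
    qBinom RatFunc.X (m : ℤ) (k : ℤ)
      = qPoch RatFunc.X RatFunc.X m /
        (qPoch RatFunc.X RatFunc.X k * qPoch RatFunc.X RatFunc.X (m - k)) := by
  unfold qBinom
  rw [if_pos ⟨Int.natCast_nonneg k, by exact_mod_cast h⟩]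
  have h1 : ((m : ℤ)).toNat = m := by omega
  have h2 : ((k : ℤ)).toNat = k := by omega
  have h3 : ((m : ℤ) - k).toNat = m - k := by omega
  rw [h1, h2, h3]

lemma pascal_alg (A B C u v : RatFunc ℚ) (hA : A ≠ 0) (hB : B ≠ 0) (hC : C ≠ 0)
    (hu : 1 - u ≠ 0) (hv : 1 - v ≠ 0) :
    A * (1 - v * u) / (B * (1 - u) * (C * (1 - v)))
      = A / (B * (1 - u) * C) + v * (A / (B * (C * (1 - v)))) := by
  field_simp
  ring

lemma gb_eq (m k : ℕ) : gb RatFunc.X m k = qBinom RatFunc.X (m : ℤ) (k : ℤ) := by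
  induction m generalizing k with
  | zero =>
    cases k with
    | zero =>
      rw [qBinom_ratio le_rfl]
      simp [gb, qPoch]
    | succ k =>
      show (0 : RatFunc ℚ) = _
      unfold qBinom
      rw [if_neg (by omega)]
  | succ m ih =>
    cases k with
    | zero =>
      rw [gb_zero_right, qBinom_ratio (Nat.zero_le _)]
      rw [Nat.sub_zero]
      have h0 : qPoch RatFunc.X RatFunc.X 0 = 1 := by simp [qPoch]
      rw [h0, one_mul, div_self (qPoch_ne_zero _)]
    | succ k =>
      show gb RatFunc.X m (k+1) + RatFunc.X ^ (m - k) * gb RatFunc.X m k = _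
      by_cases hk : k + 1 ≤ m + 1
      · rcases Nat.lt_or_ge k m with hkm | hkm
        · -- k < m
          rw [ih, ih, qBinom_ratio (show k+1 ≤ m+1 by omega),
            qBinom_ratio (show k+1 ≤ m by omega), qBinom_ratio (show k ≤ m by omega)]
          have e1 : m + 1 - (k + 1) = m - k := by omega
          rw [e1, show m - (k+1) = m - k - 1 from by omega,
            show m - k = m - k - 1 + 1 from by omega]
          rw [qPoch_succ m, qPoch_succ (m - k - 1), qPoch_succ k]
          rw [show RatFunc.X ^ (m+1)
              = RatFunc.X ^ (m - k - 1 + 1) * RatFunc.X ^ (k+1) from by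
            rw [← pow_add]; congr 1; omega]
          exact (pascal_alg _ _ _ _ _ (qPoch_ne_zero m) (qPoch_ne_zero k)
            (qPoch_ne_zero (m - k - 1)) (one_sub_X_pow_ne_zero (k+1) (by omega))
            (one_sub_X_pow_ne_zero (m - k - 1 + 1) (by omega))).symm
        · -- k = m
          have hkm' : k = m := by omega
          subst hkm'
          rw [gb_eq_zero _ (by omega), gb_self, mul_one, Nat.sub_self, pow_zero,
            zero_add, qBinom_ratio le_rfl, Nat.sub_self]
          have h0 : qPoch RatFunc.X RatFunc.X 0 = 1 := by simp [qPoch]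
          rw [h0, mul_one, div_self (qPoch_ne_zero _)]
      · rw [gb_eq_zero _ (by omega), gb_eq_zero _ (by omega), mul_zero, add_zero]
        unfold qBinom
        rw [if_neg (by omega)]

lemma vdm (m : ℕ) : ∀ n k : ℕ, k ≤ n →
    ∑ j ∈ Finset.range (k+1),
      RatFunc.X ^ (j * (n - k + j)) * gb RatFunc.X m j * gb RatFunc.X n (k - j)
    = gb RatFunc.X (m + n) k := by
  induction m with
  | zero =>
    intro n k hk
    rw [Finset.sum_eq_single 0]
    · simp [gb_zero_right]
    · intro j _ hj
      rw [show gb RatFunc.X 0 j = 0 from gb_eq_zero _ (by omega), mul_zero,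
        zero_mul]
    · intro habs; simp at habs
  | succ m ih =>
    intro n k hk
    cases k with
    | zero =>
      simp [gb_zero_right]
    | succ k =>
      rw [Finset.sum_range_succ']
      have expand : ∀ i ∈ Finset.range (k+1),
          RatFunc.X ^ ((i+1) * (n - (k+1) + (i+1))) * gb RatFunc.X (m+1) (i+1) *
            gb RatFunc.X n (k+1 - (i+1))
          = RatFunc.X ^ ((i+1) * (n - (k+1) + (i+1))) * gb RatFunc.X m (i+1) *
              gb RatFunc.X n (k+1 - (i+1))
            + RatFunc.X ^ (m + n - k) *
              (RatFunc.X ^ (i * (n - k + i)) * gb RatFunc.X m i * gb RatFunc.X n (k - i)) := by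
        intro i hi
        simp only [Finset.mem_range] at hi
        show RatFunc.X ^ _ * (gb RatFunc.X m (i+1) + RatFunc.X ^ (m-i) * gb RatFunc.X m i) * _ = _
        rw [mul_add, add_mul]
        congr 1
        have hki : k + 1 - (i+1) = k - i := by omega
        rw [hki]
        by_cases him : i ≤ m
        · have hexp : (i+1) * (n - (k+1) + (i+1)) + (m - i)
              = (m + n - k) + i * (n - k + i) := by
            obtain ⟨e, rfl⟩ : ∃ e, n = k + 1 + e := ⟨n - (k+1), by omega⟩
            obtain ⟨p, rfl⟩ : ∃ p, m = i + p := ⟨m - i, by omega⟩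
            rw [show k + 1 + e - (k+1) = e from by omega,
              show i + p - i = p from by omega,
              show i + p + (k + 1 + e) - k = i + p + e + 1 from by omega,
              show k + 1 + e - k = e + 1 from by omega]
            ring
          have h2 : (RatFunc.X : RatFunc ℚ) ^ (m + n - k) * RatFunc.X ^ (i * (n - k + i))
              = RatFunc.X ^ (m - i) * RatFunc.X ^ ((i+1) * (n - (k+1) + (i+1))) := by
            rw [← pow_add, ← pow_add]
            congr 1
            rw [← hexp]
            exact Nat.add_comm _ _
          have key : ∀ (x g h : RatFunc ℚ) (E1 E2 M I : ℕ),
              x^M * x^I = x^E2 * x^E1 →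
              x^E1 * (x^E2 * g) * h = x^M * (x^I * g * h) := by
            intro x g h E1 E2 M I hx
            calc x^E1 * (x^E2 * g) * h = (x^M * x^I) * g * h := by rw [hx]; ring
              _ = x^M * (x^I * g * h) := by ring
          exact key _ _ _ _ _ _ _ h2
        · rw [gb_eq_zero _ (show m < i by omega)]
          ring
      rw [Finset.sum_congr rfl expand, Finset.sum_add_distrib, add_right_comm]
      have hS1 : (∑ i ∈ Finset.range (k+1),
            RatFunc.X ^ ((i+1) * (n - (k+1) + (i+1))) * gb RatFunc.X m (i+1) *
              gb RatFunc.X n (k+1 - (i+1)))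
          + RatFunc.X ^ (0 * (n - (k+1) + 0)) * gb RatFunc.X (m+1) 0 *
              gb RatFunc.X n (k+1 - 0)
          = gb RatFunc.X (m + n) (k+1) := by
        rw [← ih n (k+1) hk, Finset.sum_range_succ' _ (k+1)]
        congr 1
        simp [gb_zero_right]
      rw [hS1, ← Finset.mul_sum, ih n k (by omega),
        show m + 1 + n = (m + n) + 1 from by omega]
      rfl

theorem q_gauss_binomial (a b c : ℕ) (ha : 0 < a) (hb : 0 < b) (hc : 0 < c)
    (h : a + b < c) :
    ∑ n ∈ Finset.range (min a b + 1),
      (RatFunc.X : RatFunc ℚ) ^ (n * (c + n - 1)) *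
        qBinom RatFunc.X (a : ℤ) (n : ℤ) *
        qBinom RatFunc.X ((b : ℤ) + c - 1) ((b : ℤ) - n)
    = qBinom RatFunc.X ((a : ℤ) + b + c - 1) (b : ℤ) := by
  have hR : ((a : ℤ) + b + c - 1) = ((a + (b + c - 1) : ℕ) : ℤ) := by
    push_cast; omega
  rw [hR, ← gb_eq]
  have hterm : ∀ n ∈ Finset.range (min a b + 1),
      (RatFunc.X : RatFunc ℚ) ^ (n * (c + n - 1)) *
        qBinom RatFunc.X (a : ℤ) (n : ℤ) *
        qBinom RatFunc.X ((b : ℤ) + c - 1) ((b : ℤ) - n)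
      = RatFunc.X ^ (n * ((b + c - 1) - b + n)) * gb RatFunc.X a n *
          gb RatFunc.X (b + c - 1) (b - n) := by
    intro n hn
    simp only [Finset.mem_range] at hn
    have hnb : n ≤ b := by omega
    have h1 : (b : ℤ) + c - 1 = ((b + c - 1 : ℕ) : ℤ) := by push_cast; omega
    have h2 : (b : ℤ) - n = ((b - n : ℕ) : ℤ) := by push_cast; omega
    have h3 : n * (c + n - 1) = n * ((b + c - 1) - b + n) := by
      congr 1; omega
    rw [h1, h2, ← gb_eq, ← gb_eq, h3]
  rw [Finset.sum_congr rfl hterm]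
  rw [Finset.sum_subset (Finset.range_subset_range.mpr (show min a b + 1 ≤ b + 1 by omega))
    (by
      intro n hn hn'
      simp only [Finset.mem_range] at hn hn'
      have : a < n := by omega
      rw [gb_eq_zero _ this, mul_zero, zero_mul])]
  exact vdm a (b + c - 1) b (by omega)
end

section
/- For nonnegative integers m, n, M, N with M ≥ m: ∑_{r=0}^{min(M−m, N)} q^{(N-r)(M-r-m)} · C_q(M−m, r) · C_q(N+m, m+r) · C_q(m+n+r, M+N) = C_q(m+n, M) · C_q(n, N). -/
open Finset

/-!
Both sides satisfy the same recurrence. The q-Pascal rule applied to `C_q(m+n+r, M+N)` and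
`C_q(N+m, m+r)` splits the summand for `(m+1, n+1, M+1, N+1)` into the summands for
`(m+1, n, M+1, N+1)`, `(m+1, n, M+1, N)` and `(m, n+1, M, N+1)`, weighted by `q^(M+N+2)`,
`q^(M+1)` and `1`. For `m = 0` the third piece is instead, after the shift `r ↦ r+1`, the
summand for `(1, n, N+1, M)`, with the roles of `M` and `N` exchanged. The q-Pascal rule applied
to `C_q(m+n+2, M+1)` and `C_q(n+1, N+1)` gives the same recurrence for the right-hand side, so
induction on `n` and then on `m` reduces everything to the boundary cases `N = 0`, `n = 0` and
`m = M = 0`, where the sum has at most one nonzero term.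
-/

theorem qPoch_zero (q a : RatFunc ℚ) : qPoch q a 0 = 1 := prod_range_zero _

theorem qPoch_self_succ (q : RatFunc ℚ) (n : ℕ) :
    qPoch q q (n + 1) = qPoch q q n * (1 - q ^ (n + 1)) := by
  rw [qPoch, prod_range_succ, pow_succ']
  rfl

section QBinom

variable {q : RatFunc ℚ}

theorem qPoch_self_ne_zero (hq : ∀ j : ℕ, q ^ (j + 1) ≠ 1) (n : ℕ) : qPoch q q n ≠ 0 :=
  prod_ne_zero_iff.mpr fun j _ => by rw [← pow_succ', sub_ne_zero]; exact (hq j).symm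

theorem qBinom_natCast_of_le {n k : ℕ} (h : k ≤ n) :
    qBinom q n k = qPoch q q n / (qPoch q q k * qPoch q q (n - k)) := by
  rw [qBinom, if_pos ⟨k.cast_nonneg, by exact_mod_cast h⟩, Int.toNat_natCast, Int.toNat_natCast,
    ← Nat.cast_sub h, Int.toNat_natCast]

theorem qBinom_of_lt {n k : ℤ} (h : n < k) : qBinom q n k = 0 :=
  if_neg fun hk => h.not_ge hk.2

theorem qBinom_zero_right (hq : ∀ j : ℕ, q ^ (j + 1) ≠ 1) (n : ℕ) : qBinom q n 0 = 1 := by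
  rw [← Nat.cast_zero, qBinom_natCast_of_le n.zero_le, qPoch_zero, one_mul, Nat.sub_zero,
    div_self (qPoch_self_ne_zero hq n)]

theorem qBinom_self (hq : ∀ j : ℕ, q ^ (j + 1) ≠ 1) (n : ℕ) : qBinom q n n = 1 := by
  rw [qBinom_natCast_of_le le_rfl, Nat.sub_self, qPoch_zero, mul_one,
    div_self (qPoch_self_ne_zero hq n)]

theorem qBinom_succ_succ (hq : ∀ j : ℕ, q ^ (j + 1) ≠ 1) (n k : ℕ) :
    qBinom q (n + 1) (k + 1) = qBinom q n k + q ^ (k + 1) * qBinom q n (k + 1) := by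
  obtain h | rfl | h := lt_trichotomy n k
  · rw [qBinom_of_lt (k := k + 1) (by omega), qBinom_of_lt (k := k) (by omega),
      qBinom_of_lt (k := k + 1) (by omega)]
    ring
  · rw [qBinom_of_lt (n := n) (k := n + 1) (by omega), mul_zero, add_zero]
    exact_mod_cast (qBinom_self hq (n + 1)).trans (qBinom_self hq n).symm
  obtain ⟨c, rfl⟩ := Nat.exists_eq_add_of_lt h
  have hP := qPoch_self_ne_zero hq
  simp only [← Nat.cast_succ]
  rw [qBinom_natCast_of_le (by omega), qBinom_natCast_of_le (by omega),
    qBinom_natCast_of_le (by omega), show k + c + 1 + 1 - (k + 1) = c + 1 by omega,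
    show k + c + 1 - (k + 1) = c by omega, show k + c + 1 - k = c + 1 by omega,
    qPoch_self_succ q (k + c + 1), qPoch_self_succ q k, qPoch_self_succ q c]
  have hk : 1 - q ^ (k + 1) ≠ 0 := sub_ne_zero.2 (hq k).symm
  have hc : 1 - q ^ (c + 1) ≠ 0 := sub_ne_zero.2 (hq c).symm
  field_simp [hP, hk, hc]
  ring

theorem qBinom_mul_qBinom_succ_succ (hq : ∀ j : ℕ, q ^ (j + 1) ≠ 1) (a n M N : ℕ) :
    qBinom q (a + 1) (M + 1) * qBinom q (n + 1) (N + 1) =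
      q ^ (M + N + 2) * (qBinom q a (M + 1) * qBinom q n (N + 1)) +
        q ^ (M + 1) * (qBinom q a (M + 1) * qBinom q n N) +
        qBinom q a M * qBinom q (n + 1) (N + 1) := by
  rw [qBinom_succ_succ hq a M, qBinom_succ_succ hq n N]
  ring

end QBinom

theorem zpow_mul_pow_eq_zpow_mul_pow {G : Type*} [GroupWithZero G] {x : G} (hx : x ≠ 0)
    {a b : ℤ} {k l : ℕ} (h : a + k = b + l) : x ^ a * x ^ k = x ^ b * x ^ l := by
  rw [← zpow_natCast, ← zpow_natCast, ← zpow_add₀ hx, ← zpow_add₀ hx, h]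

theorem RatFunc.X_pow_succ_ne_one (K : Type*) [Field K] (j : ℕ) :
    (X : RatFunc K) ^ (j + 1) ≠ 1 := by
  rw [← RatFunc.algebraMap_X, ← map_pow, ← map_one (algebraMap (Polynomial K) (RatFunc K)),
    Ne, (RatFunc.algebraMap_injective K).eq_iff]
  intro h
  simpa using congrArg Polynomial.natDegree h

local notation "q" => (RatFunc.X : RatFunc ℚ)

noncomputable def andrewsTerm (m n M N r : ℕ) : RatFunc ℚ :=
  q ^ (((N : ℤ) - r) * ((M : ℤ) - r - m)) * qBinom q ((M : ℤ) - m) r *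
    qBinom q ((N : ℤ) + m) ((m : ℤ) + r) * qBinom q ((m : ℤ) + n + r) ((M : ℤ) + N)

theorem andrewsTerm_succ (m n M N r : ℕ) :
    andrewsTerm (m + 1) (n + 1) (M + 1) (N + 1) r =
      q ^ (M + N + 2) * andrewsTerm (m + 1) n (M + 1) (N + 1) r +
        q ^ (M + 1) * andrewsTerm (m + 1) n (M + 1) N r + andrewsTerm m (n + 1) M (N + 1) r := by
  have hq := RatFunc.X_pow_succ_ne_one ℚ
  have pascal₁ := qBinom_succ_succ hq (m + n + r + 1) (M + N + 1)
  have pascal₂ := qBinom_succ_succ hq (N + m + 1) (m + r)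
  have hpow : q ^ (((N : ℤ) - r + 1) * ((M : ℤ) - r - m)) * q ^ (m + r + 1) =
      q ^ (((N : ℤ) - r) * ((M : ℤ) - r - m)) * q ^ (M + 1) :=
    zpow_mul_pow_eq_zpow_mul_pow RatFunc.X_ne_zero (by push_cast; ring)
  simp only [andrewsTerm]
  push_cast at pascal₁ pascal₂ ⊢
  linear_combination (norm := ring_nf)
    (q ^ (((N : ℤ) - r + 1) * ((M : ℤ) - r - m)) * qBinom q ((M : ℤ) - m) r *
      qBinom q ((N : ℤ) + m + 2) ((m : ℤ) + r + 1)) * pascal₁ +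
    (q ^ (((N : ℤ) - r + 1) * ((M : ℤ) - r - m)) * qBinom q ((M : ℤ) - m) r *
      qBinom q ((m : ℤ) + n + r + 1) ((M : ℤ) + N + 1)) * pascal₂ +
    (qBinom q ((M : ℤ) - m) r * qBinom q ((N : ℤ) + m + 1) ((m : ℤ) + r + 1) *
      qBinom q ((m : ℤ) + n + r + 1) ((M : ℤ) + N + 1)) * hpow

theorem andrewsTerm_zero_succ (n M N s : ℕ) :
    andrewsTerm 0 (n + 1) (M + 1) (N + 1) (s + 1) =
      q ^ (M + N + 2) * andrewsTerm 0 n (M + 1) (N + 1) (s + 1) +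
        q ^ (M + 1) * andrewsTerm 0 n (M + 1) N (s + 1) + andrewsTerm 1 n (N + 1) M s := by
  have hq := RatFunc.X_pow_succ_ne_one ℚ
  have pascal₁ := qBinom_succ_succ hq (n + s + 1) (M + N + 1)
  have pascal₂ := qBinom_succ_succ hq N s
  have hpow : q ^ (((N : ℤ) - s) * ((M : ℤ) - s)) * q ^ (s + 1) =
      q ^ (((N : ℤ) - s - 1) * ((M : ℤ) - s)) * q ^ (M + 1) :=
    zpow_mul_pow_eq_zpow_mul_pow RatFunc.X_ne_zero (by push_cast; ring)
  simp only [andrewsTerm]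
  push_cast at pascal₁ pascal₂ ⊢
  linear_combination (norm := ring_nf)
    (q ^ (((N : ℤ) - s) * ((M : ℤ) - s)) * qBinom q ((M : ℤ) + 1) ((s : ℤ) + 1) *
      qBinom q ((N : ℤ) + 1) ((s : ℤ) + 1)) * pascal₁ +
    (q ^ (((N : ℤ) - s) * ((M : ℤ) - s)) * qBinom q ((M : ℤ) + 1) ((s : ℤ) + 1) *
      qBinom q ((n : ℤ) + s + 1) ((M : ℤ) + N + 1)) * pascal₂ +
    (qBinom q ((M : ℤ) + 1) ((s : ℤ) + 1) * qBinom q (N : ℤ) ((s : ℤ) + 1) *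
      qBinom q ((n : ℤ) + s + 1) ((M : ℤ) + N + 1)) * hpow

theorem andrewsTerm_zero_zero (n M N : ℕ) :
    andrewsTerm 0 (n + 1) (M + 1) (N + 1) 0 =
      q ^ (M + N + 2) * andrewsTerm 0 n (M + 1) (N + 1) 0 +
        q ^ (M + 1) * andrewsTerm 0 n (M + 1) N 0 := by
  have hq := RatFunc.X_pow_succ_ne_one ℚ
  have pascal := qBinom_succ_succ hq n (M + N + 1)
  have hpow : q ^ (((N : ℤ) + 1) * ((M : ℤ) + 1)) * q ^ 0 =
      q ^ ((N : ℤ) * ((M : ℤ) + 1)) * q ^ (M + 1) :=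
    zpow_mul_pow_eq_zpow_mul_pow RatFunc.X_ne_zero (by push_cast; ring)
  simp only [andrewsTerm, Nat.cast_zero, add_zero, zero_add, sub_zero, qBinom_zero_right hq,
    mul_one]
  push_cast at pascal ⊢
  linear_combination (norm := ring_nf)
    q ^ (((N : ℤ) + 1) * ((M : ℤ) + 1)) * pascal + qBinom q (n : ℤ) ((M : ℤ) + N + 1) * hpow

noncomputable def andrewsSum (m n M N : ℕ) : RatFunc ℚ :=
  ∑ r ∈ range (min (M - m) N + 1), andrewsTerm m n M N r

theorem andrewsTerm_eq_zero {m n M N r : ℕ} (h : min (M - m) N < r) :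
    andrewsTerm m n M N r = 0 := by
  rw [andrewsTerm]
  rcases lt_or_ge (M - m) r with h' | h'
  · rw [qBinom_of_lt (n := (M : ℤ) - m) (by omega), mul_zero, zero_mul, zero_mul]
  · rw [qBinom_of_lt (n := (N : ℤ) + m) (by omega), mul_zero, zero_mul]

theorem andrewsSum_eq_sum_range {m n M N K : ℕ} (hK : min (M - m) N < K) :
    andrewsSum m n M N = ∑ r ∈ range K, andrewsTerm m n M N r :=
  sum_subset (range_subset_range.mpr hK) fun _ _ hr =>
    andrewsTerm_eq_zero (by simp only [mem_range] at hr; omega)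

theorem andrewsSum_succ (m n M N : ℕ) :
    andrewsSum (m + 1) (n + 1) (M + 1) (N + 1) =
      q ^ (M + N + 2) * andrewsSum (m + 1) n (M + 1) (N + 1) +
        q ^ (M + 1) * andrewsSum (m + 1) n (M + 1) N + andrewsSum m (n + 1) M (N + 1) := by
  simp (disch := omega) only [andrewsSum_eq_sum_range (K := M + N + 3), andrewsTerm_succ,
    mul_sum, sum_add_distrib]

theorem andrewsSum_zero_succ (n M N : ℕ) :
    andrewsSum 0 (n + 1) (M + 1) (N + 1) =
      q ^ (M + N + 2) * andrewsSum 0 n (M + 1) (N + 1) +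
        q ^ (M + 1) * andrewsSum 0 n (M + 1) N + andrewsSum 1 n (N + 1) M := by
  simp (disch := omega) only [andrewsSum_eq_sum_range (m := 0) (K := M + N + 3),
    andrewsSum_eq_sum_range (m := 1) (K := M + N + 2), sum_range_succ' _ (M + N + 2),
    andrewsTerm_zero_succ, andrewsTerm_zero_zero, mul_add, mul_sum, sum_add_distrib]
  ring

theorem andrewsSum_N_zero {m M : ℕ} (n : ℕ) (h : m ≤ M) :
    andrewsSum m n M 0 = qBinom q (m + n) M * qBinom q n 0 := by
  have hq := RatFunc.X_pow_succ_ne_one ℚ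
  rw [andrewsSum, Nat.min_zero, sum_range_one, andrewsTerm, ← Nat.cast_sub h]
  simp only [Nat.cast_zero, sub_zero, zero_mul, zpow_zero, add_zero, zero_add, one_mul,
    qBinom_zero_right hq, qBinom_self hq]
  ring

theorem andrewsSum_n_zero {m M : ℕ} (N : ℕ) (h : m ≤ M) : andrewsSum m 0 M (N + 1) = 0 :=
  sum_eq_zero fun r hr => by
    rw [mem_range] at hr
    rw [andrewsTerm, qBinom_of_lt (n := (m : ℤ) + (0 : ℕ) + r) (by omega), mul_zero]

theorem andrewsSum_m_M_zero (n N : ℕ) : andrewsSum 0 n 0 N = qBinom q n N := by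
  have hq := RatFunc.X_pow_succ_ne_one ℚ
  rw [andrewsSum, Nat.zero_sub, Nat.zero_min, sum_range_one, andrewsTerm]
  simp only [Nat.cast_zero, sub_zero, mul_zero, zpow_zero, add_zero, zero_add, one_mul,
    qBinom_zero_right hq, show qBinom q 0 0 = 1 by exact_mod_cast qBinom_zero_right hq 0]

theorem andrewsSum_eq (m n M N : ℕ) (h : m ≤ M) :
    andrewsSum m n M N = qBinom q (m + n) M * qBinom q n N := by
  have hq := RatFunc.X_pow_succ_ne_one ℚ
  induction n generalizing m M N with
  | zero =>
    obtain _ | N := N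
    · exact andrewsSum_N_zero 0 h
    rw [andrewsSum_n_zero N h, qBinom_of_lt (n := ((0 : ℕ) : ℤ)) (by omega), mul_zero]
  | succ n ihn =>
    obtain _ | N := N
    · exact andrewsSum_N_zero (n + 1) h
    induction m generalizing M N with
    | zero =>
      obtain _ | M := M
      · rw [andrewsSum_m_M_zero, Nat.cast_zero, zero_add, qBinom_zero_right hq, one_mul]
      rw [andrewsSum_zero_succ, ihn 0 (M + 1) (N + 1) h, ihn 0 (M + 1) N h,
        ihn 1 (N + 1) M (by omega)]
      push_cast
      linear_combination (norm := ring_nf) -qBinom_mul_qBinom_succ_succ hq n n M N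
    | succ m ihm =>
      obtain _ | M := M
      · omega
      rw [andrewsSum_succ, ihn (m + 1) (M + 1) (N + 1) h, ihn (m + 1) (M + 1) N h,
        ihm M (by omega) N]
      have hrec := qBinom_mul_qBinom_succ_succ hq (m + n + 1) n M N
      push_cast at hrec ⊢
      linear_combination (norm := ring_nf) -hrec

theorem q_andrews (m n M N : ℕ) (hMm : m ≤ M) :
    ∑ r ∈ Finset.range (min (M - m) N + 1),
      (RatFunc.X : RatFunc ℚ) ^ (((N : ℤ) - r) * ((M : ℤ) - r - m)) *
        qBinom RatFunc.X ((M : ℤ) - m) (r : ℤ) *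
        qBinom RatFunc.X ((N : ℤ) + m) ((m : ℤ) + r) *
        qBinom RatFunc.X ((m : ℤ) + n + r) ((M : ℤ) + N)
    = qBinom RatFunc.X ((m : ℤ) + n) (M : ℤ) * qBinom RatFunc.X (n : ℤ) (N : ℤ) :=
  andrewsSum_eq m n M N hMm
end
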